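/- Let Ω ⊂ ℂ be a bounded open set, let k : ℂ × ℂ → ℂ be smooth with compact support, and define the integral operator (Kf)(z) := ∫_ℂ k(z, ζ) f(ζ) dA(ζ). Let r ∈ (2, ∞). Then there exists a constant C > 0, depending only on Ω, r, k, such that for every ω ∈ ℂ with ω ≠ 0 and every smooth compactly supported f : ℂ → ℂ with support contained in Ω, one has ‖K( e^{−i·Re((·)·ω̄)} f )‖_{L^∞(ℂ)} ≤ C · |ω|^{−1} · ‖f‖_{W^{1,r}(Ω)}. -/

import Mathlib

open MeasureTheory Complex
open scoped ENNReal

/-- Integral operator with kernel `k`: `(Kf)(z) = ∫_ℂ k(z, ζ) f(ζ) dA(ζ)`. -/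
noncomputable def kernelOp (k : ℂ × ℂ → ℂ) (f : ℂ → ℂ) (z : ℂ) : ℂ :=
  ∫ ζ, k (z, ζ) * f ζ

/-- The `W^{1,p}(Ω)` norm: `‖f‖_{L^p(Ω)} + ‖∂ₓf‖_{L^p(Ω)} + ‖∂ᵧf‖_{L^p(Ω)}`. -/
noncomputable def W1pNorm (Ω : Set ℂ) (p : ℝ≥0∞) (f : ℂ → ℂ) : ℝ≥0∞ :=
  eLpNorm f p (volume.restrict Ω)
    + eLpNorm (fun z => fderiv ℝ f z 1) p (volume.restrict Ω)
    + eLpNorm (fun z => fderiv ℝ f z Complex.I) p (volume.restrict Ω)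

/-- The phase `v ↦ -i Re(v ω̄)` as a continuous ℝ-linear map `ℂ →L[ℝ] ℂ`. -/
noncomputable def phaseL (ω : ℂ) : ℂ →L[ℝ] ℂ :=
  (-Complex.I) • (Complex.ofRealCLM.comp (Complex.reCLM.comp
    ((ContinuousLinearMap.mul ℂ ℂ ((starRingEnd ℂ) ω)).restrictScalars ℝ)))

lemma phaseL_apply (ω v : ℂ) :
    phaseL ω v = -Complex.I * (((v * (starRingEnd ℂ) ω).re : ℝ) : ℂ) := by
  simp [phaseL, mul_comm]

lemma pointwise_bound (Ω : Set ℂ) (hΩm : MeasurableSet Ω) (hΩb : Bornology.IsBounded Ω)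
    (k : ℂ × ℂ → ℂ) (hk : ContDiff ℝ (⊤ : ℕ∞) k)
    (B M : ℝ) (hB : ∀ p, ‖k p‖ ≤ B) (hM : ∀ p, ‖fderiv ℝ k p‖ ≤ M)
    (ω : ℂ) (hω : ω ≠ 0) (f : ℂ → ℂ) (hf : ContDiff ℝ (⊤ : ℕ∞) f)
    (hfc : HasCompactSupport f) (hsupp : tsupport f ⊆ Ω) (z : ℂ) :
    ‖kernelOp k (fun ζ =>
        Complex.exp (-Complex.I * (((ζ * (starRingEnd ℂ) ω).re : ℝ) : ℂ)) * f ζ) z‖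
      ≤ (‖ω‖)⁻¹ * ((M + B)
          * ∫ ζ in Ω, (‖f ζ‖ + ‖fderiv ℝ f ζ 1‖ + ‖fderiv ℝ f ζ Complex.I‖)) := by
  have habs : 0 < ‖ω‖ := norm_pos_iff.mpr hω
  have hB0 : 0 ≤ B := le_trans (norm_nonneg _) (hB 0)
  have hM0 : 0 ≤ M := le_trans (norm_nonneg _) (hM 0)
  set e : ℂ → ℂ := fun ζ => Complex.exp (phaseL ω ζ) with he_def
  set g : ℂ → ℂ := fun ζ => k (z, ζ) * f ζ with hg_def
  set h : ℂ → ℝ := fun ζ => ‖f ζ‖ + ‖fderiv ℝ f ζ 1‖ + ‖fderiv ℝ f ζ Complex.I‖ with hh_def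
  -- basic facts
  have he_deriv : ∀ ζ, HasFDerivAt e (e ζ • phaseL ω) ζ := fun ζ =>
    ((phaseL ω).hasFDerivAt).cexp
  have he_diff : Differentiable ℝ e := fun ζ => (he_deriv ζ).differentiableAt
  have he_cont : Continuous e := he_diff.continuous
  have he_norm : ∀ ζ, ‖e ζ‖ = 1 := by
    intro ζ
    rw [he_def]
    simp [phaseL_apply, Complex.norm_exp]
  have hkz_smooth : ContDiff ℝ (⊤ : ℕ∞) (fun ζ : ℂ => k (z, ζ)) :=
    hk.comp (contDiff_const.prodMk contDiff_id)
  have hg_smooth : ContDiff ℝ (⊤ : ℕ∞) g := hkz_smooth.mul hf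
  have hg_diff : Differentiable ℝ g := hg_smooth.differentiable (by simp)
  have hg_cont : Continuous g := hg_smooth.continuous
  have hg_cs : HasCompactSupport g := by
    exact HasCompactSupport.mul_left hfc
  have hg'_cont : Continuous (fun ζ => fderiv ℝ g ζ ω) :=
    (hg_smooth.continuous_fderiv (by simp)).clm_apply continuous_const
  have hg'_cs : HasCompactSupport (fun ζ => fderiv ℝ g ζ ω) :=
    hg_cs.fderiv_apply ℝ ω
  -- rewrite the operator value
  have hker : kernelOp k (fun ζ =>
      Complex.exp (-Complex.I * (((ζ * (starRingEnd ℂ) ω).re : ℝ) : ℂ)) * f ζ) z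
      = ∫ ζ, e ζ * g ζ := by
    unfold kernelOp
    congr 1
    funext ζ
    rw [he_def]
    simp only [phaseL_apply]
    ring
  -- integration by parts
  have Hfg : Integrable (fun ζ => e ζ * g ζ) := by
    apply Continuous.integrable_of_hasCompactSupport (he_cont.mul hg_cont)
    exact HasCompactSupport.mul_left hg_cs
  have Hfg' : Integrable (fun ζ => e ζ * fderiv ℝ g ζ ω) := by
    apply Continuous.integrable_of_hasCompactSupport (he_cont.mul hg'_cont)
    exact HasCompactSupport.mul_left hg'_cs
  have hfe : ∀ ζ, fderiv ℝ e ζ ω = phaseL ω ω * (e ζ) := by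
    intro ζ
    rw [(he_deriv ζ).fderiv]
    simp [mul_comm]
  have Hf'g : Integrable (fun ζ => fderiv ℝ e ζ ω * g ζ) := by
    have : (fun ζ => fderiv ℝ e ζ ω * g ζ)
        = fun ζ => phaseL ω ω * (e ζ * g ζ) := by
      funext ζ; rw [hfe ζ]; ring
    rw [this]
    exact Hfg.const_mul _
  have key := integral_mul_fderiv_eq_neg_fderiv_mul_of_integrable
    (μ := volume) (f := e) (g := g) (v := ω) Hf'g Hfg' Hfg (fun x _ => he_diff x) (fun x _ => hg_diff x)
  -- rewrite key : ∫ e * g'ω = - ∫ (fderiv e ω) * g = -(phaseL ω ω) * ∫ e g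
  have key2 : ∫ ζ, e ζ * fderiv ℝ g ζ ω = -(phaseL ω ω) * ∫ ζ, e ζ * g ζ := by
    rw [key]
    rw [show (fun ζ => fderiv ℝ e ζ ω * g ζ) = fun ζ => phaseL ω ω * (e ζ * g ζ) from
      funext fun ζ => by rw [hfe ζ]; ring]
    rw [show (fun ζ => phaseL ω ω * (e ζ * g ζ)) = fun ζ => phaseL ω ω • (e ζ * g ζ) from rfl,
      integral_smul]
    simp [smul_eq_mul]
  have hnc : ‖phaseL ω ω‖ = (‖ω‖) ^ 2 := by
    rw [phaseL_apply, Complex.mul_conj]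
    simp [Complex.sq_norm, Complex.normSq_nonneg]
  have heq : (‖ω‖) ^ 2 * ‖∫ ζ, e ζ * g ζ‖ = ‖∫ ζ, e ζ * fderiv ℝ g ζ ω‖ := by
    rw [key2, norm_mul, norm_neg, hnc]
  -- bound the derivative integral
  have hfd : Differentiable ℝ f := hf.differentiable (by simp)
  have hkzd : Differentiable ℝ (fun ζ : ℂ => k (z, ζ)) := hkz_smooth.differentiable (by simp)
  have hgderiv : ∀ ζ, fderiv ℝ g ζ
      = k (z, ζ) • fderiv ℝ f ζ + f ζ • fderiv ℝ (fun w => k (z, w)) ζ := fun ζ =>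
    fderiv_mul (hkzd ζ) (hfd ζ)
  have hkz_bound : ∀ ζ : ℂ, ‖fderiv ℝ (fun w => k (z, w)) ζ ω‖ ≤ M * ‖ω‖ := by
    intro ζ
    have hcomp : HasFDerivAt (fun w => k (z, w))
        ((fderiv ℝ k (z, ζ)).comp (ContinuousLinearMap.inr ℝ ℂ ℂ)) ζ :=
      ((hk.differentiable (by simp) (z, ζ)).hasFDerivAt).comp ζ (hasFDerivAt_prodMk_right z ζ)
    rw [hcomp.fderiv]
    calc ‖(fderiv ℝ k (z, ζ)) ((ContinuousLinearMap.inr ℝ ℂ ℂ) ω)‖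
        ≤ ‖fderiv ℝ k (z, ζ)‖ * ‖(ContinuousLinearMap.inr ℝ ℂ ℂ) ω‖ :=
          (fderiv ℝ k (z, ζ)).le_opNorm _
      _ ≤ M * ‖ω‖ := by
          apply mul_le_mul (hM _) _ (norm_nonneg _) hM0
          simp [Prod.norm_def]
  have hf'_bound : ∀ ζ : ℂ, ‖fderiv ℝ f ζ ω‖
      ≤ ‖ω‖ * (‖fderiv ℝ f ζ 1‖ + ‖fderiv ℝ f ζ Complex.I‖) := by
    intro ζ
    have hω_eq : ω = ω.re • (1 : ℂ) + ω.im • Complex.I := by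
      simp [Complex.ext_iff]
    calc ‖fderiv ℝ f ζ ω‖
        = ‖ω.re • fderiv ℝ f ζ 1 + ω.im • fderiv ℝ f ζ Complex.I‖ := by
          conv_lhs => rw [hω_eq]
          rw [map_add, (fderiv ℝ f ζ).map_smul, (fderiv ℝ f ζ).map_smul]
      _ ≤ ‖ω.re • fderiv ℝ f ζ 1‖ + ‖ω.im • fderiv ℝ f ζ Complex.I‖ := norm_add_le _ _
      _ = |ω.re| * ‖fderiv ℝ f ζ 1‖ + |ω.im| * ‖fderiv ℝ f ζ Complex.I‖ := by
          rw [norm_smul, norm_smul]; simp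
      _ ≤ ‖ω‖ * ‖fderiv ℝ f ζ 1‖ + ‖ω‖ * ‖fderiv ℝ f ζ Complex.I‖ := by
          gcongr
          · exact Complex.abs_re_le_norm ω
          · exact Complex.abs_im_le_norm ω
      _ = ‖ω‖ * (‖fderiv ℝ f ζ 1‖ + ‖fderiv ℝ f ζ Complex.I‖) := by ring
  have hg'_bound : ∀ ζ : ℂ, ‖fderiv ℝ g ζ ω‖ ≤ (M + B) * ‖ω‖ * h ζ := by
    intro ζ
    rw [hgderiv ζ]
    simp only [ContinuousLinearMap.add_apply, ContinuousLinearMap.smul_apply, smul_eq_mul]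
    calc ‖k (z, ζ) * fderiv ℝ f ζ ω + f ζ * fderiv ℝ (fun w => k (z, w)) ζ ω‖
        ≤ ‖k (z, ζ)‖ * ‖fderiv ℝ f ζ ω‖ + ‖f ζ‖ * ‖fderiv ℝ (fun w => k (z, w)) ζ ω‖ := by
          refine (norm_add_le _ _).trans ?_
          rw [norm_mul, norm_mul]
      _ ≤ B * (‖ω‖ * (‖fderiv ℝ f ζ 1‖ + ‖fderiv ℝ f ζ Complex.I‖))
            + ‖f ζ‖ * (M * ‖ω‖) := by
          gcongr
          · exact hB _
          · exact hf'_bound ζ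
          · exact hkz_bound ζ
      _ ≤ (M + B) * ‖ω‖ * h ζ := by
          show _ ≤ (M + B) * ‖ω‖
            * (‖f ζ‖ + ‖fderiv ℝ f ζ 1‖ + ‖fderiv ℝ f ζ Complex.I‖)
          have h1 : 0 ≤ ‖f ζ‖ := norm_nonneg _
          have h2 : 0 ≤ ‖fderiv ℝ f ζ 1‖ := norm_nonneg _
          have h3 : 0 ≤ ‖fderiv ℝ f ζ Complex.I‖ := norm_nonneg _
          nlinarith [mul_nonneg (mul_nonneg hM0 habs.le) (add_nonneg h2 h3),
            mul_nonneg (mul_nonneg hB0 habs.le) h1]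
  -- vanishing outside Ω
  have hvanish : ∀ ζ : ℂ, ζ ∉ Ω → ‖fderiv ℝ g ζ ω‖ = 0 := by
    intro ζ hζ
    have hζ' : ζ ∉ tsupport f := fun hin => hζ (hsupp hin)
    have hf0 : f ζ = 0 := image_eq_zero_of_notMem_tsupport hζ'
    have hdf0 : fderiv ℝ f ζ = 0 := by
      by_contra hne
      exact hζ' (support_fderiv_subset ℝ (Function.mem_support.mpr hne))
    rw [hgderiv ζ, hf0, hdf0]
    simp
  -- the integral bound
  have hInt1 : Integrable (fun ζ => ‖fderiv ℝ g ζ ω‖) :=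
    (hg'_cont.norm).integrable_of_hasCompactSupport hg'_cs.norm
  have hhcont : Continuous h := by
    rw [hh_def]
    have hdc : Continuous (fderiv ℝ f) := hf.continuous_fderiv (by simp)
    exact ((hfd.continuous.norm).add ((hdc.clm_apply continuous_const).norm)).add
      ((hdc.clm_apply continuous_const).norm)
  have hhΩ : IntegrableOn h Ω :=
    (hhcont.locallyIntegrable.integrableOn_isCompact hΩb.isCompact_closure).mono_set subset_closure
  have hmono : ∫ ζ, ‖fderiv ℝ g ζ ω‖
      ≤ (M + B) * ‖ω‖ * ∫ ζ in Ω, h ζ := by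
    rw [← setIntegral_eq_integral_of_forall_compl_eq_zero hvanish]
    calc ∫ ζ in Ω, ‖fderiv ℝ g ζ ω‖
        ≤ ∫ ζ in Ω, (M + B) * ‖ω‖ * h ζ := by
          apply setIntegral_mono_on hInt1.integrableOn (hhΩ.const_mul _) hΩm
          intro ζ _; exact hg'_bound ζ
      _ = (M + B) * ‖ω‖ * ∫ ζ in Ω, h ζ := by
          rw [show (fun ζ => (M + B) * ‖ω‖ * h ζ)
              = fun ζ => ((M + B) * ‖ω‖) • h ζ from rfl, integral_smul, smul_eq_mul]
  rw [hker]
  have hnorm_le : ‖∫ ζ, e ζ * fderiv ℝ g ζ ω‖ ≤ ∫ ζ, ‖fderiv ℝ g ζ ω‖ := by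
    refine (norm_integral_le_integral_norm _).trans_eq ?_
    congr 1; funext ζ; rw [norm_mul, he_norm ζ, one_mul]
  have hX : ‖ω‖ ^ 2 * ‖∫ ζ, e ζ * g ζ‖
      ≤ (M + B) * ‖ω‖ * ∫ ζ in Ω, h ζ := by
    rw [heq]; exact hnorm_le.trans hmono
  rw [inv_mul_eq_div, le_div_iff₀ habs]
  nlinarith [hX, habs]

theorem stmt_11 (Ω : Set ℂ) (hΩo : IsOpen Ω) (hΩb : Bornology.IsBounded Ω)
    (k : ℂ × ℂ → ℂ) (hk : ContDiff ℝ (⊤ : ℕ∞) k) (hkc : HasCompactSupport k)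
    (r : ℝ) (hr : 2 < r) :
    ∃ C : ℝ, 0 < C ∧ ∀ (ω : ℂ), ω ≠ 0 → ∀ (f : ℂ → ℂ),
      ContDiff ℝ (⊤ : ℕ∞) f → HasCompactSupport f → tsupport f ⊆ Ω →
      eLpNorm
          (kernelOp k (fun z =>
            Complex.exp (-Complex.I * (((z * (starRingEnd ℂ) ω).re : ℝ) : ℂ)) * f z))
          ⊤ volume
        ≤ ENNReal.ofReal (C * (‖ω‖)⁻¹) * W1pNorm Ω (ENNReal.ofReal r) f := by
  have hΩm : MeasurableSet Ω := hΩo.measurableSet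
  obtain ⟨B, hB⟩ := hkc.exists_bound_of_continuous hk.continuous
  obtain ⟨M, hM⟩ := (hkc.fderiv ℝ).exists_bound_of_continuous (hk.continuous_fderiv (by simp))
  have hB0 : 0 ≤ B := le_trans (norm_nonneg _) (hB 0)
  have hM0 : 0 ≤ M := le_trans (norm_nonneg _) (hM 0)
  have hr0 : 0 < r := by linarith
  have hvol : volume Ω ≠ ⊤ := hΩb.measure_lt_top.ne
  set ε : ℝ := 1 - 1 / r with hε_def
  have hε0 : 0 ≤ ε := by
    have : 1 / r ≤ 1 := by rw [div_le_one hr0]; linarith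
    simp only [hε_def]; linarith
  set V : ℝ := (volume Ω).toReal ^ ε with hV_def
  have hV0 : 0 ≤ V := Real.rpow_nonneg ENNReal.toReal_nonneg ε
  refine ⟨(M + B) * V + 1, by positivity, ?_⟩
  intro ω hω f hf hfc hsupp
  have habs : 0 < ‖ω‖ := norm_pos_iff.mpr hω
  set S : ℝ := ∫ ζ in Ω, (‖f ζ‖ + ‖fderiv ℝ f ζ 1‖ + ‖fderiv ℝ f ζ Complex.I‖) with hS_def
  have step1 : eLpNorm (kernelOp k (fun z =>
        Complex.exp (-Complex.I * (((z * (starRingEnd ℂ) ω).re : ℝ) : ℂ)) * f z)) ⊤ volume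
      ≤ ENNReal.ofReal ((‖ω‖)⁻¹ * ((M + B) * S)) := by
    rw [eLpNorm_exponent_top]
    exact eLpNormEssSup_le_of_ae_bound (ae_of_all _
      (fun z' => pointwise_bound Ω hΩm hΩb k hk B M hB hM ω hω f hf hfc hsupp z'))
  refine step1.trans ?_
  -- integrability of the three pieces on Ω
  have hf_cont : Continuous f := hf.continuous
  have hdc : Continuous (fderiv ℝ f) := hf.continuous_fderiv (by simp)
  have hint0 : IntegrableOn f Ω volume :=
    (hf_cont.locallyIntegrable.integrableOn_isCompact hΩb.isCompact_closure).mono_set subset_closure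
  have hint1 : IntegrableOn (fun ζ => fderiv ℝ f ζ 1) Ω volume :=
    (((hdc.clm_apply continuous_const)).locallyIntegrable.integrableOn_isCompact
      hΩb.isCompact_closure).mono_set subset_closure
  have hint2 : IntegrableOn (fun ζ => fderiv ℝ f ζ Complex.I) Ω volume :=
    (((hdc.clm_apply continuous_const)).locallyIntegrable.integrableOn_isCompact
      hΩb.isCompact_closure).mono_set subset_closure
  have hSsplit : S = (∫ ζ in Ω, ‖f ζ‖) + (∫ ζ in Ω, ‖fderiv ℝ f ζ 1‖)
      + (∫ ζ in Ω, ‖fderiv ℝ f ζ Complex.I‖) := by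
    have i0 : Integrable (fun ζ => ‖f ζ‖) (volume.restrict Ω) := hint0.norm
    have i1 : Integrable (fun ζ => ‖fderiv ℝ f ζ 1‖) (volume.restrict Ω) := hint1.norm
    have i2 : Integrable (fun ζ => ‖fderiv ℝ f ζ Complex.I‖) (volume.restrict Ω) := hint2.norm
    have i01 : Integrable (fun ζ => ‖f ζ‖ + ‖fderiv ℝ f ζ 1‖) (volume.restrict Ω) := i0.add i1
    rw [hS_def, integral_add i01 i2, integral_add i0 i1]
  have e0 : ENNReal.ofReal (∫ ζ in Ω, ‖f ζ‖) = eLpNorm f 1 (volume.restrict Ω) := by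
    rw [eLpNorm_one_eq_lintegral_enorm]
    exact ofReal_integral_norm_eq_lintegral_enorm hint0
  have e1 : ENNReal.ofReal (∫ ζ in Ω, ‖fderiv ℝ f ζ 1‖)
      = eLpNorm (fun ζ => fderiv ℝ f ζ 1) 1 (volume.restrict Ω) := by
    rw [eLpNorm_one_eq_lintegral_enorm]
    exact ofReal_integral_norm_eq_lintegral_enorm hint1
  have e2 : ENNReal.ofReal (∫ ζ in Ω, ‖fderiv ℝ f ζ Complex.I‖)
      = eLpNorm (fun ζ => fderiv ℝ f ζ Complex.I) 1 (volume.restrict Ω) := by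
    rw [eLpNorm_one_eq_lintegral_enorm]
    exact ofReal_integral_norm_eq_lintegral_enorm hint2
  have hVe : (volume Ω) ^ ε = ENNReal.ofReal V := by
    rw [hV_def, ENNReal.toReal_rpow, ENNReal.ofReal_toReal (ENNReal.rpow_ne_top_of_nonneg hε0 hvol)]
  have hH : ∀ u : ℂ → ℂ, AEStronglyMeasurable u (volume.restrict Ω) →
      eLpNorm u 1 (volume.restrict Ω)
        ≤ eLpNorm u (ENNReal.ofReal r) (volume.restrict Ω) * ENNReal.ofReal V := by
    intro u hu
    have h1r : (1 : ℝ≥0∞) ≤ ENNReal.ofReal r := by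
      rw [show (1 : ℝ≥0∞) = ENNReal.ofReal 1 by simp]
      exact ENNReal.ofReal_le_ofReal (by linarith)
    have := eLpNorm_le_eLpNorm_mul_rpow_measure_univ (p := 1) (q := ENNReal.ofReal r)
      (μ := volume.restrict Ω) h1r hu
    rw [Measure.restrict_apply_univ] at this
    have hexp : 1 / (1 : ℝ≥0∞).toReal - 1 / (ENNReal.ofReal r).toReal = ε := by
      rw [hε_def]
      simp [ENNReal.toReal_ofReal hr0.le]
    rwa [hexp, hVe] at this
  have hW : ENNReal.ofReal S ≤ W1pNorm Ω (ENNReal.ofReal r) f * ENNReal.ofReal V := by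
    have n0 : 0 ≤ ∫ ζ in Ω, ‖f ζ‖ := integral_nonneg fun _ => norm_nonneg _
    have n1 : 0 ≤ ∫ ζ in Ω, ‖fderiv ℝ f ζ 1‖ := integral_nonneg fun _ => norm_nonneg _
    have n2 : 0 ≤ ∫ ζ in Ω, ‖fderiv ℝ f ζ Complex.I‖ := integral_nonneg fun _ => norm_nonneg _
    rw [hSsplit, ENNReal.ofReal_add (by linarith) n2, ENNReal.ofReal_add n0 n1]
    rw [e0, e1, e2]
    unfold W1pNorm
    rw [add_mul, add_mul]
    gcongr
    · exact hH f hf_cont.aestronglyMeasurable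
    · exact hH _ ((hdc.clm_apply continuous_const)).aestronglyMeasurable
    · exact hH _ ((hdc.clm_apply continuous_const)).aestronglyMeasurable
  calc ENNReal.ofReal ((‖ω‖)⁻¹ * ((M + B) * S))
      = ENNReal.ofReal (‖ω‖)⁻¹ * (ENNReal.ofReal (M + B) * ENNReal.ofReal S) := by
        rw [ENNReal.ofReal_mul (by positivity), ENNReal.ofReal_mul (by linarith : (0:ℝ) ≤ M + B)]
    _ ≤ ENNReal.ofReal (‖ω‖)⁻¹ * (ENNReal.ofReal (M + B)
          * (W1pNorm Ω (ENNReal.ofReal r) f * ENNReal.ofReal V)) := by gcongr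
    _ = ENNReal.ofReal ((M + B) * V * (‖ω‖)⁻¹) * W1pNorm Ω (ENNReal.ofReal r) f := by
        rw [ENNReal.ofReal_mul (by positivity), ENNReal.ofReal_mul (by linarith : (0:ℝ) ≤ M + B)]
        ring
    _ ≤ ENNReal.ofReal (((M + B) * V + 1) * (‖ω‖)⁻¹)
          * W1pNorm Ω (ENNReal.ofReal r) f := by
        refine mul_le_mul_left (ENNReal.ofReal_le_ofReal ?_) _
        have h0 : 0 ≤ (‖ω‖)⁻¹ := inv_nonneg.mpr habs.le
        nlinarith
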